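/- arXiv:2304.00082 — 2 statements merged into one kernel-verified Lean document; each statement's English description precedes it below -/
import Mathlib

section
/- Let s, t, m be natural numbers with s ≤ m, t ≤ m and m ≤ s + t. The multinomial coefficient m! / ((s+t−m)! · (m−s)! · (m−t)!) is odd if and only if m equals the bitwise OR of s and t. -/
/-!
By Lucas' theorem at `p = 2`, `n.choose k` is odd exactly when every binary digit of `k` is a digit
of `n`, i.e. `k &&& n = k`. The multinomial coefficient factors as
`m.choose (m - s) * s.choose (m - t)`, so it is odd iff `m - s` is a submask of `m` and `m - t` a
submask of `s`. Subtracting a submask only clears its bits, which turns both conditions into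
bitwise statements about `s`, `t` and `m`; together they say exactly that every bit of `m` lies in
`s` or `t`, and conversely.
-/

open Nat

namespace Nat

theorem and_eq_left_iff_testBit {k n : ℕ} :
    k &&& n = k ↔ ∀ i, k.testBit i = true → n.testBit i = true := by
  refine ⟨fun h i hk => ?_, fun h => eq_of_testBit_eq fun i => ?_⟩
  · simpa [hk] using congrArg (testBit · i) h
  · cases hk : k.testBit i <;> simp [hk, h i]

theorem add_xor_eq_of_and_eq_left {k n : ℕ} (h : k &&& n = k) : k + (n ^^^ k) = n := by
  induction n using Nat.strong_induction_on generalizing k with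
  | _ n ih =>
    rcases Nat.eq_zero_or_pos n with rfl | hn
    · simp_all
    · have hhalf := ih (n / 2) (div_lt_self hn one_lt_two) (by rw [← and_div_two, h])
      rw [← xor_div_two] at hhalf
      have hlow : k % 2 = 1 → n % 2 = 1 := fun hk => (and_mod_two_eq_one.mp (h ▸ hk)).2
      have := @xor_mod_two_eq_one n k
      omega

theorem testBit_sub_of_and_eq_left {k n : ℕ} (h : k &&& n = k) (i : ℕ) :
    (n - k).testBit i = (n.testBit i && !k.testBit i) := by
  have hxor : n - k = n ^^^ k := by have := add_xor_eq_of_and_eq_left h; omega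
  have hk := and_eq_left_iff_testBit.mp h i
  rw [hxor, testBit_xor]
  cases hki : k.testBit i <;> cases hni : n.testBit i <;> simp_all

theorem sub_and_eq_left_iff {k n : ℕ} (hk : k ≤ n) : (n - k) &&& n = n - k ↔ k &&& n = k := by
  suffices h : ∀ k ≤ n, k &&& n = k → (n - k) &&& n = n - k from
    ⟨fun h' => by simpa [Nat.sub_sub_self hk] using h (n - k) (sub_le n k) h', h k hk⟩
  intro j _ hj
  refine and_eq_left_iff_testBit.mpr fun i hi => ?_
  rw [testBit_sub_of_and_eq_left hj] at hi
  simp_all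

theorem odd_choose_iff_and_eq_left (n k : ℕ) : Odd (n.choose k) ↔ k &&& n = k := by
  induction n using Nat.strong_induction_on generalizing k with
  | _ n ih =>
    rcases Nat.eq_zero_or_pos n with rfl | hn
    · cases k <;> simp
    · have : Fact (Nat.Prime 2) := ⟨prime_two⟩
      have hlucas : Odd (n.choose k) ↔ Odd ((n % 2).choose (k % 2) * (n / 2).choose (k / 2)) := by
        rw [odd_iff, odd_iff, Choose.choose_modEq_choose_mod_mul_choose_div_nat]
      have hlow : Odd ((n % 2).choose (k % 2)) ↔ (k % 2 = 1 → n % 2 = 1) := by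
        rcases mod_two_eq_zero_or_one n with hn2 | hn2 <;>
          rcases mod_two_eq_zero_or_one k with hk2 | hk2 <;> simp [hn2, hk2]
      rw [hlucas, odd_mul, hlow, ih (n / 2) (div_lt_self hn one_lt_two)]
      have := @and_mod_two_eq_one k n
      have : (k &&& n) / 2 = k / 2 &&& n / 2 := and_div_two
      omega

theorem factorial_div_factorial_mul_factorial_mul_factorial {m b c : ℕ} (hb : b ≤ m)
    (hc : c ≤ m - b) : m ! / ((m - b - c)! * b ! * c !) = m.choose b * (m - b).choose c := by
  refine Nat.div_eq_of_eq_mul_left (by positivity) ?_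
  rw [← choose_mul_factorial_mul_factorial hb, ← choose_mul_factorial_mul_factorial hc]
  ring

theorem eq_lor_iff_sub_and_eq_left {s t m : ℕ} (hs : s ≤ m) (ht : t ≤ m) :
    m = s ||| t ↔ (m - s) &&& m = m - s ∧ (m - t) &&& s = m - t := by
  rw [sub_and_eq_left_iff hs]
  constructor
  · rintro rfl
    have hts : t &&& (s ||| t) = t := and_eq_left_iff_testBit.mpr fun i hi => by simp [hi]
    refine ⟨and_eq_left_iff_testBit.mpr fun i hi => by simp [hi], ?_⟩
    refine and_eq_left_iff_testBit.mpr fun i hi => ?_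
    rw [testBit_sub_of_and_eq_left hts, testBit_lor] at hi
    cases hsi : s.testBit i <;> simp_all
  · rintro ⟨hsm, hdiff⟩
    have hsm' := and_eq_left_iff_testBit.mp hsm
    have hdiff' := and_eq_left_iff_testBit.mp hdiff
    have htm : t &&& m = t := (sub_and_eq_left_iff ht).mp <|
      and_eq_left_iff_testBit.mpr fun i hi => hsm' i (hdiff' i hi)
    refine eq_of_testBit_eq fun i => ?_
    have hsmi := hsm' i
    have htmi := and_eq_left_iff_testBit.mp htm i
    have hdiffi := hdiff' i
    rw [testBit_sub_of_and_eq_left htm] at hdiffi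
    rw [testBit_lor]
    cases hmi : m.testBit i <;> cases hsi : s.testBit i <;> cases hti : t.testBit i <;> simp_all

end Nat

/-- The multinomial coefficient m!/((s+t−m)!(m−s)!(m−t)!) is odd iff m = s ||| t. -/
theorem multinomial_odd_iff_or (s t m : ℕ) (hs : s ≤ m) (ht : t ≤ m) (hm : m ≤ s + t) :
    Odd (m.factorial / ((s + t - m).factorial * (m - s).factorial * (m - t).factorial)) ↔
      m = s ||| t := by
  have hsub : m - (m - s) = s := Nat.sub_sub_self hs
  have hfactor := factorial_div_factorial_mul_factorial_mul_factorial (sub_le m s)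
    (show m - t ≤ m - (m - s) by omega)
  rw [hsub, show s - (m - t) = s + t - m by omega] at hfactor
  rw [hfactor, odd_mul, odd_choose_iff_and_eq_left, odd_choose_iff_and_eq_left,
    eq_lor_iff_sub_and_eq_left hs ht]
end

section
/- Let c_k(d) denote the k-fold Catalan convolution, i.e. the sum over all k-tuples (d₁,...,d_k) of natural numbers with d₁+...+d_k = d of the product catalan(d₁)···catalan(d_k) (so c_k(d) is the coefficient of X^d in C(X)^k, where C is the Catalan generating function). Then for all k ≥ 1 and d ≥ 0: (d + k) · c_k(d) = k · binom(2d + k − 1, d + k − 1). -/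
/-!
The convolution `c_k(d)` is the coefficient of `X^d` in `C^k`, and `C = 1 + X C²` gives
`C^(k+1) = C^k + X C^(k+2)`, i.e. `c_{k+1}(d+1) = c_k(d+1) + c_{k+2}(d)`. The ballot numbers
`k/(2d+k) · binom(2d+k, d)` satisfy the same recurrence and the same boundary values
(`1` at `d = 0`, `0` at `k = 0 < d`), so `(2d+k) c_k(d) = k binom(2d+k, d)` for all `k, d`.
The stated form follows from `(d+k) binom(2d+k, d) = (2d+k) binom(2d+k-1, d)`.
-/

open Finset PowerSeries

/-- The recurrence `b(k+1, n+1) = b(k, n+1) + b(k+2, n)` of the ballot numbers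
`b(k, n) = k/(2n+k) · binom(2n+k, n)`, cleared of denominators. -/
theorem Nat.ballot_recurrence (n k : ℕ) :
    (2 * n + k + 3) * (k * (2 * n + k + 2).choose (n + 1) + (k + 2) * (2 * n + k + 2).choose n) =
      (2 * n + k + 2) * ((k + 1) * (2 * n + k + 3).choose (n + 1)) := by
  have hpascal : (2 * n + k + 3).choose (n + 1) =
      (2 * n + k + 2).choose n + (2 * n + k + 2).choose (n + 1) := Nat.choose_succ_succ _ _
  have hsucc := Nat.choose_succ_right_eq (2 * n + k + 2) n
  rw [show 2 * n + k + 2 - n = n + k + 2 by omega] at hsucc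
  rw [hpascal]
  linear_combination 2 * hsucc.symm

namespace PowerSeries

variable {R : Type*} [CommSemiring R]

theorem coeff_prod_univ_fin (k n : ℕ) (f : Fin k → R⟦X⟧) :
    coeff n (∏ i, f i) = ∑ x ∈ Nat.antidiagonalTuple k n, ∏ i, coeff (x i) (f i) := by
  classical
  rw [coeff_prod, finsuppAntidiag, sum_map, ← piAntidiag_univ_fin_eq_antidiagonalTuple,
    ← sum_attach (piAntidiag univ n)]
  rfl

theorem coeff_pow_eq_sum_antidiagonalTuple (k n : ℕ) (φ : R⟦X⟧) :
    coeff n (φ ^ k) = ∑ x ∈ Nat.antidiagonalTuple k n, ∏ i, coeff (x i) φ := by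
  rw [← coeff_prod_univ_fin, Fin.prod_const]

theorem catalanSeries_pow_succ (k : ℕ) :
    catalanSeries ^ (k + 1) = catalanSeries ^ k + X * catalanSeries ^ (k + 2) := by
  calc catalanSeries ^ (k + 1) = catalanSeries ^ k * catalanSeries := pow_succ _ _
    _ = catalanSeries ^ k * (catalanSeries ^ 2 * X + 1) := by rw [catalanSeries_sq_mul_X_add_one]
    _ = catalanSeries ^ k + X * catalanSeries ^ (k + 2) := by ring

theorem coeff_succ_catalanSeries_pow_succ (k n : ℕ) :
    coeff (n + 1) (catalanSeries ^ (k + 1)) =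
      coeff (n + 1) (catalanSeries ^ k) + coeff n (catalanSeries ^ (k + 2)) := by
  rw [catalanSeries_pow_succ, map_add, coeff_succ_X_mul]

theorem two_mul_add_mul_coeff_catalanSeries_pow (k n : ℕ) :
    (2 * n + k) * coeff n (catalanSeries ^ k) = k * (2 * n + k).choose n := by
  induction n generalizing k with
  | zero => simp
  | succ n ihn =>
    induction k with
    | zero => simp [coeff_one]
    | succ k ihk =>
      have hk2 := ihn (k + 2)
      rw [show 2 * n + (k + 2) = 2 * n + k + 2 by omega] at hk2
      rw [show 2 * (n + 1) + k = 2 * n + k + 2 by omega] at ihk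
      rw [show 2 * (n + 1) + (k + 1) = 2 * n + k + 3 by omega]
      apply Nat.eq_of_mul_eq_mul_left (show 0 < 2 * n + k + 2 by omega)
      rw [← Nat.ballot_recurrence, coeff_succ_catalanSeries_pow_succ, ← ihk, ← hk2]
      ring

theorem add_succ_mul_coeff_catalanSeries_pow_succ (k n : ℕ) :
    (n + k + 1) * coeff n (catalanSeries ^ (k + 1)) = (k + 1) * (2 * n + k).choose n := by
  have hcoeff := two_mul_add_mul_coeff_catalanSeries_pow (k + 1) n
  rw [show 2 * n + (k + 1) = 2 * n + k + 1 by omega] at hcoeff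
  have hchoose := Nat.choose_mul_succ_eq (2 * n + k) n
  rw [show 2 * n + k + 1 - n = n + k + 1 by omega] at hchoose
  apply Nat.eq_of_mul_eq_mul_left (show 0 < 2 * n + k + 1 by omega)
  calc (2 * n + k + 1) * ((n + k + 1) * coeff n (catalanSeries ^ (k + 1)))
      = (n + k + 1) * ((2 * n + k + 1) * coeff n (catalanSeries ^ (k + 1))) := by ring
    _ = (k + 1) * ((2 * n + k + 1).choose n * (n + k + 1)) := by rw [hcoeff]; ring
    _ = (2 * n + k + 1) * ((k + 1) * (2 * n + k).choose n) := by rw [← hchoose]; ring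

end PowerSeries

/-- The k-fold Catalan convolution: (d+k)·c_k(d) = k·C(2d+k−1, d+k−1). -/
theorem catalan_convolution_formula (k d : ℕ) (hk : 1 ≤ k) :
    (d + k) * (∑ x ∈ Finset.Nat.antidiagonalTuple k d, ∏ i, catalan (x i)) =
      k * Nat.choose (2 * d + k - 1) (d + k - 1) := by
  obtain ⟨j, rfl⟩ : ∃ j, k = j + 1 := ⟨k - 1, by omega⟩
  simp_rw [← catalanSeries_coeff, ← coeff_pow_eq_sum_antidiagonalTuple]
  rw [show 2 * d + (j + 1) - 1 = 2 * d + j by omega, show d + (j + 1) - 1 = d + j by omega,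
    Nat.choose_symm_of_eq_add (show 2 * d + j = d + j + d by omega), ← add_assoc]
  exact add_succ_mul_coeff_catalanSeries_pow_succ j d
end
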